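/- In the α = 0 case, the minimum value of the signal objective over binary states is explicit: min over σ ∈ {−1,+1}ⁿ of H(σ) = ‖x‖² + (1 + 2η)·n − 2·Σ_{i=1}^{n} |x_i + η·σ′_i|. -/
import Mathlib


open Matrix

theorem explicit_min_value (n : ℕ) (x σ' : Fin n → ℝ)
    (hσ' : ∀ i, σ' i = 1 ∨ σ' i = -1) (η : ℝ) (hη : 0 ≤ η) :
    IsLeast
      {y : ℝ | ∃ σ : Fin n → ℝ, (∀ i, σ i = 1 ∨ σ i = -1) ∧
        y = (x - σ) ⬝ᵥ (x - σ) + η * ((σ - σ') ⬝ᵥ (σ - σ'))}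
      (x ⬝ᵥ x + (1 + 2 * η) * n - 2 * ∑ i, |x i + η * σ' i|) := by
  have hsum : ∀ σ : Fin n → ℝ, (∀ i, σ i = 1 ∨ σ i = -1) →
      (x - σ) ⬝ᵥ (x - σ) + η * ((σ - σ') ⬝ᵥ (σ - σ'))
      = ∑ i, (x i * x i + (1 + 2 * η) - 2 * (σ i * (x i + η * σ' i))) := by
    intro σ hσ
    simp only [dotProduct, Pi.sub_apply, Finset.mul_sum, ← Finset.sum_add_distrib]
    apply Finset.sum_congr rfl
    intro i _
    have h1 : σ i * σ i = 1 := by rcases hσ i with h | h <;> rw [h] <;> ring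
    have h2 : σ' i * σ' i = 1 := by rcases hσ' i with h | h <;> rw [h] <;> ring
    linear_combination (1 + η) * h1 + η * h2
  have hrhs : x ⬝ᵥ x + (1 + 2 * η) * n - 2 * ∑ i, |x i + η * σ' i|
      = ∑ i, (x i * x i + (1 + 2 * η) - 2 * |x i + η * σ' i|) := by
    have : ((n : ℝ)) = ∑ _i : Fin n, (1 : ℝ) := by simp
    simp only [dotProduct, this, Finset.mul_sum, ← Finset.sum_add_distrib,
      ← Finset.sum_sub_distrib]
    apply Finset.sum_congr rfl
    intro i _
    ring
  constructor
  · refine ⟨fun i => if 0 ≤ x i + η * σ' i then 1 else -1, fun i => by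
      by_cases h : 0 ≤ x i + η * σ' i <;> simp [h], ?_⟩
    rw [hsum _ (fun i => by by_cases h : 0 ≤ x i + η * σ' i <;> simp [h]), hrhs]
    apply Finset.sum_congr rfl
    intro i _
    by_cases h : 0 ≤ x i + η * σ' i
    · rw [if_pos h, abs_of_nonneg h]; ring
    · rw [if_neg h, abs_of_neg (lt_of_not_ge h)]; ring
  · rintro y ⟨σ, hσ, rfl⟩
    rw [hsum σ hσ, hrhs]
    apply Finset.sum_le_sum
    intro i _
    have : σ i * (x i + η * σ' i) ≤ |x i + η * σ' i| := by
      rcases hσ i with h | h <;> rw [h]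
      · simpa using le_abs_self _
      · linarith [neg_abs_le (x i + η * σ' i)]
    linarith
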